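/- Let d ≥ 1 and C₀ > 0, and let h : (0,∞) → ℝ be smooth with h ≥ 0, h' > 0, ρ h'(ρ) ≤ C₀ h(ρ) and ρ |h''(ρ)| ≤ C₀ h'(ρ) for all ρ > 0; let φ be smooth on (0,∞) with ρ φ'(ρ) = h'(ρ). Then there is a constant C, depending only on d and C₀, such that every smooth ρ : T^d → (0,∞) satisfies ∫_{T^d} h'(ρ) |∇( h'(ρ) ∇√ρ )|² dx + ∫_{T^d} h'(ρ)³ |∇√ρ|⁴ / ρ dx ≤ C ∫_{T^d} h(ρ) |∇²(φ(ρ))|² dx. -/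

import Mathlib

open MeasureTheory Real

noncomputable section

/-- Partial derivative of a scalar field in the coordinate direction `i`. -/
def pd {d : ℕ} (i : Fin d) (f : (Fin d → ℝ) → ℝ) (x : Fin d → ℝ) : ℝ :=
  fderiv ℝ f x (Pi.single i 1)

/-- Gradient of a scalar field. -/
def grad {d : ℕ} (f : (Fin d → ℝ) → ℝ) (x : Fin d → ℝ) : Fin d → ℝ :=
  fun i => pd i f x

/-- Divergence of a vector field. -/
def dvg {d : ℕ} (u : (Fin d → ℝ) → (Fin d → ℝ)) (x : Fin d → ℝ) : ℝ :=
  ∑ i, pd i (fun y => u y i) x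

/-- Row-wise divergence of a matrix field: `(dvgM M x) i = ∑ j, ∂_j M_{ij}`. -/
def dvgM {d : ℕ} (M : (Fin d → ℝ) → Fin d → Fin d → ℝ) (x : Fin d → ℝ) : Fin d → ℝ :=
  fun i => ∑ j, pd j (fun y => M y i j) x

/-- Hessian of a scalar field. -/
def hess {d : ℕ} (f : (Fin d → ℝ) → ℝ) (x : Fin d → ℝ) : Fin d → Fin d → ℝ :=
  fun i j => pd i (fun y => pd j f y) x

/-- Laplacian of a scalar field. -/
def lap {d : ℕ} (f : (Fin d → ℝ) → ℝ) (x : Fin d → ℝ) : ℝ :=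
  ∑ i, pd i (fun y => pd i f y) x

/-- Jacobian matrix of a vector field: `(jac u x) i j = ∂_j u_i`. -/
def jac {d : ℕ} (u : (Fin d → ℝ) → (Fin d → ℝ)) (x : Fin d → ℝ) : Fin d → Fin d → ℝ :=
  fun i j => pd j (fun y => u y i) x

/-- Symmetric part of the gradient of a vector field, `Du = (∇u + (∇u)ᵀ)/2`. -/
def symD {d : ℕ} (u : (Fin d → ℝ) → (Fin d → ℝ)) (x : Fin d → ℝ) : Fin d → Fin d → ℝ :=
  fun i j => (jac u x i j + jac u x j i) / 2

/-- Antisymmetric part of the gradient of a vector field, `Au = (∇u − (∇u)ᵀ)/2`. -/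
def antiD {d : ℕ} (u : (Fin d → ℝ) → (Fin d → ℝ)) (x : Fin d → ℝ) : Fin d → Fin d → ℝ :=
  fun i j => (jac u x i j - jac u x j i) / 2

/-- Tensor product of two vectors: `(a ⊗ b)_{ij} = a_i b_j`. -/
def tens {d : ℕ} (a b : Fin d → ℝ) : Fin d → Fin d → ℝ := fun i j => a i * b j

/-- ℤ^d-periodicity: a function of this kind descends to the torus `T^d = ℝ^d/ℤ^d`. -/
def SpacePeriodic {d : ℕ} {E : Type*} (f : (Fin d → ℝ) → E) : Prop :=
  ∀ x : Fin d → ℝ, ∀ n : Fin d → ℤ, f (x + fun i => (n i : ℝ)) = f x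

/-- Fundamental domain of the torus `T^d = ℝ^d/ℤ^d` (with its probability Lebesgue measure). -/
def unitBox (d : ℕ) : Set (Fin d → ℝ) := Set.Icc 0 1

/-! ### Auxiliary machinery -/

namespace Statement12Aux

variable {d : ℕ}

lemma pd_eq {f : (Fin d → ℝ) → ℝ} {L : (Fin d → ℝ) →L[ℝ] ℝ} {x} (hf : HasFDerivAt f L x)
    (i : Fin d) : pd i f x = L (Pi.single i 1) := by rw [pd, hf.fderiv]

lemma comp_contDiff {f : ℝ → ℝ} {ρ : (Fin d → ℝ) → ℝ} (hf : ContDiffOn ℝ (⊤ : ℕ∞) f (Set.Ioi 0))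
    (hρ : ContDiff ℝ (⊤ : ℕ∞) ρ) (hpos : ∀ x, 0 < ρ x) : ContDiff ℝ (⊤ : ℕ∞) (fun y => f (ρ y)) := by
  rw [← contDiffOn_univ]
  exact hf.comp hρ.contDiffOn (fun x _ => hpos x)

lemma hasFDerivAt_comp' {f : ℝ → ℝ} {ρ : (Fin d → ℝ) → ℝ} (hf : ContDiffOn ℝ (⊤ : ℕ∞) f (Set.Ioi 0))
    (hρ : ContDiff ℝ (⊤ : ℕ∞) ρ) (hpos : ∀ x, 0 < ρ x) (x : Fin d → ℝ) :
    HasFDerivAt (fun y => f (ρ y)) (deriv f (ρ x) • fderiv ℝ ρ x) x := by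
  have hdf : DifferentiableAt ℝ f (ρ x) :=
    (hf.differentiableOn (by simp)).differentiableAt (Ioi_mem_nhds (hpos x))
  exact hdf.hasDerivAt.comp_hasFDerivAt x (hρ.differentiable (by simp) x).hasFDerivAt

lemma pd_comp {f : ℝ → ℝ} {ρ : (Fin d → ℝ) → ℝ} (hf : ContDiffOn ℝ (⊤ : ℕ∞) f (Set.Ioi 0))
    (hρ : ContDiff ℝ (⊤ : ℕ∞) ρ) (hpos : ∀ x, 0 < ρ x) (x : Fin d → ℝ) (i : Fin d) :
    pd i (fun y => f (ρ y)) x = deriv f (ρ x) * pd i ρ x := by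
  rw [pd_eq (hasFDerivAt_comp' hf hρ hpos x) i]
  rfl

lemma contDiff_pd {f : (Fin d → ℝ) → ℝ} (hf : ContDiff ℝ (⊤ : ℕ∞) f) (i : Fin d) :
    ContDiff ℝ (⊤ : ℕ∞) (fun y => pd i f y) :=
  (hf.fderiv_right (m := (⊤ : ℕ∞)) (by simp)).clm_apply contDiff_const

lemma hasFDerivAt_sqrt_comp {ρ : (Fin d → ℝ) → ℝ} (hρ : ContDiff ℝ (⊤ : ℕ∞) ρ) (hpos : ∀ x, 0 < ρ x)
    (x : Fin d → ℝ) :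
    HasFDerivAt (fun y => Real.sqrt (ρ y)) ((1 / (2 * Real.sqrt (ρ x))) • fderiv ℝ ρ x) x :=
  (Real.hasDerivAt_sqrt (ne_of_gt (hpos x))).comp_hasFDerivAt x
    (hρ.differentiable (by simp) x).hasFDerivAt

lemma pd_sqrt_comp {ρ : (Fin d → ℝ) → ℝ} (hρ : ContDiff ℝ (⊤ : ℕ∞) ρ) (hpos : ∀ x, 0 < ρ x)
    (x : Fin d → ℝ) (i : Fin d) :
    pd i (fun y => Real.sqrt (ρ y)) x = pd i ρ x / (2 * Real.sqrt (ρ x)) := by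
  rw [pd_eq (hasFDerivAt_sqrt_comp hρ hpos x) i]
  show (1 / (2 * Real.sqrt (ρ x))) * (fderiv ℝ ρ x (Pi.single i 1)) = _
  rw [pd]
  ring

lemma periodic_pd {f : (Fin d → ℝ) → ℝ} (hf : Differentiable ℝ f)
    (hp : SpacePeriodic f) (i : Fin d) : SpacePeriodic (pd i f) := by
  intro x n
  set c : Fin d → ℝ := fun j => (n j : ℝ) with hc
  have h1 : HasFDerivAt (fun y => f (y + c)) (fderiv ℝ f (x + c)) x := by
    have := (hf (x + c)).hasFDerivAt.comp x ((hasFDerivAt_id x).add_const c)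
    simpa [Function.comp_def] using this
  have h2 : (fun y => f (y + c)) = f := funext fun y => hp y n
  rw [h2] at h1
  simp [pd, h1.fderiv]

lemma insertNth_one_eq {n : ℕ} (i : Fin (n + 1)) (y : Fin n → ℝ) :
    i.insertNth 1 y = i.insertNth 0 y + fun j => (((Pi.single i 1 : Fin (n+1) → ℤ) j : ℝ)) := by
  funext j
  refine Fin.succAboveCases i ?_ ?_ j
  · simp
  · intro k
    simp [Fin.succAbove_ne i k, Pi.single_apply, (Fin.succAbove_ne i k).symm]

lemma integral_dvg_zero {n : ℕ} (V : (Fin (n+1) → ℝ) → Fin (n+1) → ℝ)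
    (hV : ∀ j, ContDiff ℝ (⊤ : ℕ∞) (fun y => V y j))
    (hper : ∀ j, SpacePeriodic (fun y => V y j)) :
    ∫ x in unitBox (n+1), dvg V x = 0 := by
  have key := MeasureTheory.integral_divergence_of_hasFDerivAt_off_countable'
    (a := (0 : Fin (n+1) → ℝ)) (b := 1) (by intro i; norm_num)
    (fun j y => V y j) (fun j x => fderiv ℝ (fun y => V y j) x) ∅ Set.countable_empty
    (fun j => ((hV j).continuous).continuousOn)
    (fun x _ j => (((hV j).differentiable (by simp)) x).hasFDerivAt)
    (by
      apply Continuous.integrableOn_Icc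
      exact continuous_finset_sum _ fun j _ =>
        (((hV j).fderiv_right (m := (⊤ : ℕ∞)) (by simp)).clm_apply contDiff_const).continuous)
  rw [show unitBox (n+1) = Set.Icc (0 : Fin (n+1) → ℝ) 1 from rfl]
  have e1 : (∫ x in Set.Icc (0 : Fin (n+1) → ℝ) 1, dvg V x)
      = ∫ x in Set.Icc (0 : Fin (n+1) → ℝ) 1, ∑ j, fderiv ℝ (fun y => V y j) x (Pi.single j 1) := by
    apply setIntegral_congr_fun (by measurability)
    intro x _
    simp [dvg, pd]
  rw [e1, key]
  refine Finset.sum_eq_zero fun j _ => sub_eq_zero.mpr ?_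
  have : (fun x : Fin n → ℝ => V (j.insertNth ((1 : Fin (n+1) → ℝ) j) x) j)
      = fun x : Fin n → ℝ => V (j.insertNth ((0 : Fin (n+1) → ℝ) j) x) j := by
    funext x
    have h1 : (1 : Fin (n+1) → ℝ) j = 1 := rfl
    have h2 : (0 : Fin (n+1) → ℝ) j = 0 := rfl
    rw [h1, h2, insertNth_one_eq j x]
    exact hper j (j.insertNth 0 x) (Pi.single j 1)
  rw [this]

lemma integral_dvg_zero' (hd : 1 ≤ d) (V : (Fin d → ℝ) → Fin d → ℝ)
    (hV : ∀ j, ContDiff ℝ (⊤ : ℕ∞) (fun y => V y j))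
    (hper : ∀ j, SpacePeriodic (fun y => V y j)) :
    ∫ x in unitBox d, dvg V x = 0 := by
  obtain ⟨n, rfl⟩ : ∃ n, d = n + 1 := ⟨d - 1, by omega⟩
  exact integral_dvg_zero V hV hper

lemma pd_mul {f g : (Fin d → ℝ) → ℝ} {x : Fin d → ℝ} (hf : DifferentiableAt ℝ f x)
    (hg : DifferentiableAt ℝ g x) (i : Fin d) :
    pd i (fun y => f y * g y) x = f x * pd i g x + g x * pd i f x := by
  show pd i (f * g) x = _
  rw [pd_eq (hf.hasFDerivAt.mul hg.hasFDerivAt) i]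
  rfl

end Statement12Aux

open Statement12Aux

set_option maxHeartbeats 2000000 in
theorem statement12 (d : ℕ) (hd : 1 ≤ d) (C₀ : ℝ) (hC₀ : 0 < C₀) :
    ∃ C : ℝ, 0 < C ∧
      ∀ h φ : ℝ → ℝ,
        ContDiffOn ℝ (⊤ : ℕ∞) h (Set.Ioi 0) →
        (∀ r : ℝ, 0 < r → 0 ≤ h r) →
        (∀ r : ℝ, 0 < r → 0 < deriv h r) →
        (∀ r : ℝ, 0 < r → r * deriv h r ≤ C₀ * h r) →
        (∀ r : ℝ, 0 < r → r * |deriv (deriv h) r| ≤ C₀ * deriv h r) →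
        ContDiffOn ℝ (⊤ : ℕ∞) φ (Set.Ioi 0) →
        (∀ r : ℝ, 0 < r → r * deriv φ r = deriv h r) →
      ∀ ρ : (Fin d → ℝ) → ℝ, ContDiff ℝ (⊤ : ℕ∞) ρ → SpacePeriodic ρ → (∀ x, 0 < ρ x) →
        (∫ x in unitBox d, deriv h (ρ x) * ∑ i, ∑ j,
            jac (fun y => deriv h (ρ y) • grad (fun z => Real.sqrt (ρ z)) y) x i j ^ 2)
          + (∫ x in unitBox d,
              deriv h (ρ x) ^ 3 * (∑ i, grad (fun z => Real.sqrt (ρ z)) x i ^ 2) ^ 2 / ρ x)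
          ≤ C * ∫ x in unitBox d, h (ρ x) * ∑ i, ∑ j, hess (fun y => φ (ρ y)) x i j ^ 2 := by
  refine ⟨C₀ * ((d + 2) ^ 2 + 1), by positivity, ?_⟩
  intro h φ hh hh0 hh1 hh2 _hh3 hφ hφ' ρ hρ hper hpos
  set u : (Fin d → ℝ) → ℝ := fun y => φ (ρ y) with hu_def
  set sq : (Fin d → ℝ) → ℝ := fun y => Real.sqrt (ρ y) with hsq_def
  set v : (Fin d → ℝ) → Fin d → ℝ := fun y => deriv h (ρ y) • grad sq y with hv_def
  set Q : (Fin d → ℝ) → ℝ := fun y => ∑ k, pd k u y ^ 2 with hQ_def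
  set V : (Fin d → ℝ) → Fin d → ℝ := fun y j => ρ y * (Q y * pd j u y) with hV_def
  -- basic positivity
  have hd1 : ∀ x, 0 < deriv h (ρ x) := fun x => hh1 _ (hpos x)
  have hsqpos : ∀ x, 0 < sq x := fun x => Real.sqrt_pos.mpr (hpos x)
  have hsqsq : ∀ x, sq x * sq x = ρ x := fun x => Real.mul_self_sqrt (hpos x).le
  -- smoothness
  have hu : ContDiff ℝ (⊤ : ℕ∞) u := comp_contDiff hφ hρ hpos
  have hUc : ∀ k, ContDiff ℝ (⊤ : ℕ∞) (fun y => pd k u y) := fun k => contDiff_pd hu k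
  have hQc : ContDiff ℝ (⊤ : ℕ∞) Q := by
    rw [hQ_def]
    exact ContDiff.sum fun k _ => (hUc k).pow 2
  have hdh : ContDiffOn ℝ (⊤ : ℕ∞) (deriv h) (Set.Ioi 0) := hh.deriv_of_isOpen isOpen_Ioi (by simp)
  have hh'ρc : ContDiff ℝ (⊤ : ℕ∞) (fun y => deriv h (ρ y)) := comp_contDiff hdh hρ hpos
  have hhρc : ContDiff ℝ (⊤ : ℕ∞) (fun y => h (ρ y)) := comp_contDiff hh hρ hpos
  have hVc : ∀ j, ContDiff ℝ (⊤ : ℕ∞) (fun y => V y j) := fun j => hρ.mul (hQc.mul (hUc j))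
  have hHc : ∀ j k, Continuous (fun x => hess u x j k) :=
    fun j k => (contDiff_pd (hUc k) j).continuous
  -- periodicity
  have hu_per : SpacePeriodic u := fun x n => congrArg φ (hper x n)
  have hU_per : ∀ k, SpacePeriodic (pd k u) :=
    fun k => periodic_pd (hu.differentiable (by simp)) hu_per k
  have hQ_per : SpacePeriodic Q := fun x n => by
    rw [hQ_def]
    exact Finset.sum_congr rfl fun k _ => by rw [hU_per k x n]
  have hV_per : ∀ j, SpacePeriodic (fun y => V y j) := fun j x n => by
    show ρ _ * (Q _ * pd j u _) = ρ x * (Q x * pd j u x)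
    rw [hper x n, hQ_per x n, hU_per j x n]
  -- pointwise derivative identities
  have hderφ : ∀ x, deriv φ (ρ x) = deriv h (ρ x) / ρ x := fun x => by
    have h1 := hφ' (ρ x) (hpos x)
    rw [eq_div_iff (hpos x).ne']
    linarith [h1]
  have hpdu : ∀ x i, pd i u x = deriv φ (ρ x) * pd i ρ x := fun x i => pd_comp hφ hρ hpos x i
  have hpdsq : ∀ x i, pd i sq x = pd i ρ x / (2 * sq x) := fun x i => pd_sqrt_comp hρ hpos x i
  have hpdρ_u : ∀ x i, pd i ρ x = ρ x / deriv h (ρ x) * pd i u x := fun x i => by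
    rw [hpdu x i, hderφ x]
    field_simp
    rw [eq_div_iff (mul_ne_zero (hpos x).ne' (hd1 x).ne')]
    ring
  have hpdu_sq : ∀ x i, pd i u x = 2 * deriv h (ρ x) / sq x * pd i sq x := fun x i => by
    rw [hpdu x i, hderφ x, hpdsq x i, ← hsqsq x]
    have h1 := (hsqpos x).ne'
    field_simp
  have hQx : ∀ x, Q x = ∑ k, pd k u x ^ 2 := fun x => rfl
  -- |∇u|² in terms of |∇√ρ|²
  have hQs : ∀ x, Q x = 4 * deriv h (ρ x) ^ 2 / ρ x * ∑ i, pd i sq x ^ 2 := by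
    intro x
    have e : ∀ k : Fin d, pd k u x ^ 2 = 4 * deriv h (ρ x) ^ 2 / ρ x * pd k sq x ^ 2 := by
      intro k
      rw [hpdu_sq x k, ← hsqsq x]
      have h1 := (hsqpos x).ne'
      field_simp
      ring
    rw [hQx, Finset.sum_congr rfl fun k _ => e k, ← Finset.mul_sum]
  -- the Jacobian identity
  have jac_eq : ∀ (x : Fin d → ℝ) i j, jac v x i j
      = 1 / 2 * sq x * hess u x j i + pd i u x * (1 / 2 * pd j sq x) := by
    intro x i j
    have hvi : (fun y => v y i) = fun y => (1 / 2 * sq y) * pd i u y := by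
      funext y
      show deriv h (ρ y) * pd i sq y = _
      rw [hpdu_sq y i, hpdsq y i, ← hsqsq y]
      have h1 := (hsqpos y).ne'
      field_simp
    show pd j (fun y => v y i) x = _
    rw [hvi, pd_mul ((hasFDerivAt_sqrt_comp hρ hpos x).const_mul (1/2 : ℝ)).differentiableAt
      ((hUc i).differentiable (by simp) x) j]
    have e2 : pd j (fun y => 1 / 2 * sq y) x = 1 / 2 * pd j sq x := by
      rw [pd_eq ((hasFDerivAt_sqrt_comp hρ hpos x).const_mul (1/2 : ℝ)) j,
        pd_eq (hasFDerivAt_sqrt_comp hρ hpos x) j]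
      rfl
    rw [e2]
    rfl
  -- derivative of Q
  have hpdQ : ∀ (x : Fin d → ℝ) j, pd j Q x = ∑ k, 2 * pd k u x * hess u x j k := by
    intro x j
    have hQfd : HasFDerivAt Q
        (∑ k, (pd k u x • fderiv ℝ (fun y => pd k u y) x
          + pd k u x • fderiv ℝ (fun y => pd k u y) x)) x := by
      rw [hQ_def]
      refine HasFDerivAt.fun_sum fun k _ => ?_
      have e3 : (fun y => pd k u y ^ 2) = fun y => pd k u y * pd k u y :=
        funext fun y => pow_two _
      rw [e3]
      exact ((hUc k).differentiable (by simp) x).hasFDerivAt.mul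
        ((hUc k).differentiable (by simp) x).hasFDerivAt
    rw [pd_eq hQfd j, ContinuousLinearMap.sum_apply]
    exact Finset.sum_congr rfl fun k _ => by
      rw [ContinuousLinearMap.add_apply, ContinuousLinearMap.smul_apply]
      show pd k u x * pd j (fun y => pd k u y) x + pd k u x * pd j (fun y => pd k u y) x = _
      show pd k u x * hess u x j k + pd k u x * hess u x j k = _
      ring
  -- derivative of V j
  have hpdV : ∀ (x : Fin d → ℝ) j, pd j (fun y => V y j) x
      = ρ x * (Q x * hess u x j j + pd j u x * pd j Q x) + Q x * pd j u x * pd j ρ x := by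
    intro x j
    have e1 : (fun y => V y j) = fun y => ρ y * (Q y * pd j u y) := rfl
    rw [e1, pd_mul (g := fun y => Q y * pd j u y) (hρ.differentiable (by simp) x)
      (((hQc.differentiable (by simp)) x).mul ((hUc j).differentiable (by simp) x)) j,
      pd_mul ((hQc.differentiable (by simp)) x) ((hUc j).differentiable (by simp) x) j]
    rfl
  -- the divergence identity
  have hdvg : ∀ x : Fin d → ℝ, dvg V x
      = ρ x / deriv h (ρ x) * Q x ^ 2
        + ρ x * (2 * ∑ j, ∑ k, pd j u x * pd k u x * hess u x j k
            + Q x * ∑ j, hess u x j j) := by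
    intro x
    show ∑ j, pd j (fun y => V y j) x = _
    have e : ∀ j : Fin d, pd j (fun y => V y j) x
        = (ρ x / deriv h (ρ x) * Q x) * pd j u x ^ 2
          + (2 * ∑ k, pd j u x * pd k u x * hess u x j k) * ρ x
          + (Q x * hess u x j j) * ρ x := by
      intro j
      rw [hpdV x j, hpdQ x j, hpdρ_u x j]
      have e2 : pd j u x * ∑ k, 2 * pd k u x * hess u x j k
          = 2 * ∑ k, pd j u x * pd k u x * hess u x j k := by
        rw [Finset.mul_sum, Finset.mul_sum]
        exact Finset.sum_congr rfl fun k _ => by ring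
      rw [e2]
      ring
    rw [Finset.sum_congr rfl fun j _ => e j, Finset.sum_add_distrib, Finset.sum_add_distrib,
      ← Finset.mul_sum, ← Finset.sum_mul, ← Finset.sum_mul, ← hQx, ← Finset.mul_sum,
      ← Finset.mul_sum]
    ring
  -- pointwise bound for the first integrand
  have hbound1 : ∀ x : Fin d → ℝ, deriv h (ρ x) * ∑ i, ∑ j, jac v x i j ^ 2
      ≤ 2 * (deriv h (ρ x) ^ 3 * (∑ i, pd i sq x ^ 2) ^ 2 / ρ x)
        + C₀ / 2 * (h (ρ x) * ∑ i, ∑ j, hess u x i j ^ 2) := by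
    intro x
    have hsum1 : ∑ i, ∑ j, jac v x i j ^ 2
        ≤ (ρ x * (∑ i, ∑ j, hess u x i j ^ 2) + Q x * ∑ j, pd j sq x ^ 2) / 2 := by
      have e1 : ∀ i j, jac v x i j ^ 2
          ≤ (ρ x * hess u x j i ^ 2 + pd i u x ^ 2 * pd j sq x ^ 2) / 2 := by
        intro i j
        rw [jac_eq x i j]
        have h1 : sq x * sq x = ρ x := hsqsq x
        nlinarith [sq_nonneg (1 / 2 * sq x * hess u x j i - pd i u x * (1 / 2 * pd j sq x))]
      calc ∑ i, ∑ j, jac v x i j ^ 2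
          ≤ ∑ i, ∑ j, (ρ x * hess u x j i ^ 2 + pd i u x ^ 2 * pd j sq x ^ 2) / 2 :=
            Finset.sum_le_sum fun i _ => Finset.sum_le_sum fun j _ => e1 i j
        _ = (ρ x * (∑ i, ∑ j, hess u x i j ^ 2) + Q x * ∑ j, pd j sq x ^ 2) / 2 := by
            rw [hQx]
            simp only [add_div, Finset.sum_add_distrib]
            rw [show ∑ i : Fin d, ∑ j : Fin d, ρ x * hess u x j i ^ 2 / 2
                = ∑ j : Fin d, ∑ i : Fin d, ρ x * hess u x j i ^ 2 / 2 from Finset.sum_comm]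
            simp only [← Finset.sum_div, ← Finset.mul_sum, ← Finset.sum_mul]
            try ring
    have hS0 : (0:ℝ) ≤ ∑ i, pd i sq x ^ 2 := by positivity
    have hM0 : (0:ℝ) ≤ ∑ i, ∑ j, hess u x i j ^ 2 := by positivity
    have h2 := hh2 (ρ x) (hpos x)
    calc deriv h (ρ x) * ∑ i, ∑ j, jac v x i j ^ 2
        ≤ deriv h (ρ x) * ((ρ x * (∑ i, ∑ j, hess u x i j ^ 2)
            + Q x * ∑ j, pd j sq x ^ 2) / 2) :=
          mul_le_mul_of_nonneg_left hsum1 (hd1 x).le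
      _ = 2 * (deriv h (ρ x) ^ 3 * (∑ i, pd i sq x ^ 2) ^ 2 / ρ x)
            + deriv h (ρ x) * ρ x / 2 * ∑ i, ∑ j, hess u x i j ^ 2 := by
          rw [hQs x]
          field_simp
          ring
      _ ≤ 2 * (deriv h (ρ x) ^ 3 * (∑ i, pd i sq x ^ 2) ^ 2 / ρ x)
            + C₀ / 2 * (h (ρ x) * ∑ i, ∑ j, hess u x i j ^ 2) := by
          nlinarith [mul_le_mul_of_nonneg_right h2 hM0]
  -- second integrand as a multiple of the quantity controlled by the divergence argument
  have heq2 : ∀ x : Fin d → ℝ, deriv h (ρ x) ^ 3 * (∑ i, pd i sq x ^ 2) ^ 2 / ρ x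
      = 1 / 16 * (ρ x / deriv h (ρ x) * Q x ^ 2) := by
    intro x
    have h1 := (hpos x).ne'
    have h2 := (hd1 x).ne'
    rw [hQs x]
    field_simp
    ring
  -- pointwise bound from the divergence identity
  have hbound3 : ∀ x : Fin d → ℝ, ρ x / deriv h (ρ x) * Q x ^ 2
      ≤ 2 * dvg V x + (2 + Real.sqrt d) ^ 2 * C₀ * (h (ρ x) * ∑ i, ∑ j, hess u x i j ^ 2) := by
    intro x
    have hM0 : (0:ℝ) ≤ ∑ i, ∑ j, hess u x i j ^ 2 := by positivity
    set m := Real.sqrt (∑ i, ∑ j, hess u x i j ^ 2) with hm_def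
    have hm2 : m ^ 2 = ∑ i, ∑ j, hess u x i j ^ 2 := Real.sq_sqrt hM0
    have hm0 : (0:ℝ) ≤ m := Real.sqrt_nonneg _
    have hQ0 : (0:ℝ) ≤ Q x := by rw [hQx]; positivity
    set S := ∑ j, ∑ k, pd j u x * pd k u x * hess u x j k with hS_def
    set T := ∑ j, hess u x j j with hT_def
    -- Cauchy-Schwarz bounds
    have hS : S ^ 2 ≤ (Q x * m) ^ 2 := by
      have e1 : S = ∑ p : Fin d × Fin d, (pd p.1 u x * pd p.2 u x) * hess u x p.1 p.2 := by
        rw [hS_def, Fintype.sum_prod_type]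
      have c1 := Finset.sum_mul_sq_le_sq_mul_sq Finset.univ
        (fun p : Fin d × Fin d => pd p.1 u x * pd p.2 u x)
        (fun p : Fin d × Fin d => hess u x p.1 p.2)
      have e2 : ∑ p : Fin d × Fin d, (pd p.1 u x * pd p.2 u x) ^ 2 = Q x ^ 2 := by
        rw [Fintype.sum_prod_type, hQx]
        simp only [mul_pow, ← Finset.mul_sum, ← Finset.sum_mul]
        ring
      have e3 : ∑ p : Fin d × Fin d, hess u x p.1 p.2 ^ 2 = m ^ 2 := by
        rw [Fintype.sum_prod_type, hm2]
      rw [e1]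
      calc (∑ p : Fin d × Fin d, (pd p.1 u x * pd p.2 u x) * hess u x p.1 p.2) ^ 2
          ≤ (∑ p : Fin d × Fin d, (pd p.1 u x * pd p.2 u x) ^ 2)
            * ∑ p : Fin d × Fin d, hess u x p.1 p.2 ^ 2 := c1
        _ = (Q x * m) ^ 2 := by rw [e2, e3]; ring
    have hSb : |S| ≤ Q x * m := by
      calc |S| = Real.sqrt (S ^ 2) := (Real.sqrt_sq_eq_abs S).symm
        _ ≤ Real.sqrt ((Q x * m) ^ 2) := Real.sqrt_le_sqrt hS
        _ = Q x * m := Real.sqrt_sq (by positivity)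
    have htrb : |T| ≤ Real.sqrt d * m := by
      have c2 : ∑ j, hess u x j j ^ 2 ≤ ∑ i, ∑ j, hess u x i j ^ 2 :=
        Finset.sum_le_sum fun i _ =>
          Finset.single_le_sum (f := fun j => hess u x i j ^ 2)
            (fun j _ => sq_nonneg _) (Finset.mem_univ i)
      have c1 := Finset.sum_mul_sq_le_sq_mul_sq Finset.univ
        (fun _ : Fin d => (1:ℝ)) (fun j => hess u x j j)
      simp only [one_pow, one_mul, Finset.sum_const, Finset.card_univ, Fintype.card_fin,
        nsmul_eq_mul] at c1
      have hT2 : T ^ 2 ≤ (Real.sqrt d * m) ^ 2 := by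
        have : (Real.sqrt d * m) ^ 2 = (d : ℝ) * m ^ 2 := by
          rw [mul_pow, Real.sq_sqrt (by positivity : (0:ℝ) ≤ (d:ℝ))]
        rw [this, hm2, hT_def]
        calc (∑ j, hess u x j j) ^ 2 ≤ (d : ℝ) * 1 * ∑ j, hess u x j j ^ 2 := c1
          _ = (d : ℝ) * ∑ j, hess u x j j ^ 2 := by ring
          _ ≤ (d : ℝ) * ∑ i, ∑ j, hess u x i j ^ 2 := by
              apply mul_le_mul_of_nonneg_left c2 (by positivity)
      calc |T| = Real.sqrt (T ^ 2) := (Real.sqrt_sq_eq_abs T).symm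
        _ ≤ Real.sqrt ((Real.sqrt d * m) ^ 2) := Real.sqrt_le_sqrt hT2
        _ = Real.sqrt d * m := Real.sqrt_sq (by positivity)
    -- combine with Young's inequality
    have hr := hpos x
    have hh' := hd1 x
    have hrh := hh2 (ρ x) (hpos x)
    have habs : |ρ x * (2 * S + Q x * T)| ≤ (2 + Real.sqrt d) * (ρ x * (Q x * m)) := by
      rw [abs_mul, abs_of_pos hr]
      have h1 : |2 * S + Q x * T| ≤ 2 * (Q x * m) + Q x * (Real.sqrt d * m) := by
        calc |2 * S + Q x * T| ≤ |2 * S| + |Q x * T| := abs_add_le _ _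
          _ = 2 * |S| + Q x * |T| := by
              rw [abs_mul, abs_mul, abs_of_nonneg (by norm_num : (0:ℝ) ≤ 2),
                abs_of_nonneg hQ0]
          _ ≤ 2 * (Q x * m) + Q x * (Real.sqrt d * m) :=
              add_le_add (by linarith) (mul_le_mul_of_nonneg_left htrb hQ0)
      calc ρ x * |2 * S + Q x * T| ≤ ρ x * (2 * (Q x * m) + Q x * (Real.sqrt d * m)) :=
            mul_le_mul_of_nonneg_left h1 hr.le
        _ = (2 + Real.sqrt d) * (ρ x * (Q x * m)) := by ring
    set G := ρ x / deriv h (ρ x) with hG_def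
    have hG : G * deriv h (ρ x) = ρ x := div_mul_cancel₀ _ hh'.ne'
    have hG0 : 0 < G := div_pos hr hh'
    have young : 2 * (deriv h (ρ x) * ((2 + Real.sqrt d) * (Q x * m)))
        ≤ Q x ^ 2 + (2 + Real.sqrt d) ^ 2 * deriv h (ρ x) ^ 2 * m ^ 2 := by
      nlinarith [sq_nonneg (Q x - (2 + Real.sqrt d) * (deriv h (ρ x) * m))]
    have young' : (2 + Real.sqrt d) * (ρ x * (Q x * m))
        ≤ 1 / 2 * (G * Q x ^ 2)
          + (2 + Real.sqrt d) ^ 2 / 2 * C₀ * (h (ρ x) * m ^ 2) := by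
      have t1 : (2 + Real.sqrt d) * (ρ x * (Q x * m))
          = G / 2 * (2 * (deriv h (ρ x) * ((2 + Real.sqrt d) * (Q x * m)))) := by
        rw [hG_def]; field_simp
      have t2 := mul_le_mul_of_nonneg_left young (by positivity : (0:ℝ) ≤ G / 2)
      have t3 : G / 2 * (Q x ^ 2 + (2 + Real.sqrt d) ^ 2 * deriv h (ρ x) ^ 2 * m ^ 2)
          = 1 / 2 * (G * Q x ^ 2)
            + (2 + Real.sqrt d) ^ 2 / 2 * (ρ x * deriv h (ρ x)) * m ^ 2 := by
        rw [hG_def]; field_simp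
      have t4 : (2 + Real.sqrt d) ^ 2 / 2 * (ρ x * deriv h (ρ x)) * m ^ 2
          ≤ (2 + Real.sqrt d) ^ 2 / 2 * (C₀ * h (ρ x)) * m ^ 2 := by
        apply mul_le_mul_of_nonneg_right _ (sq_nonneg m)
        apply mul_le_mul_of_nonneg_left hrh (by positivity)
      calc (2 + Real.sqrt d) * (ρ x * (Q x * m))
          = G / 2 * (2 * (deriv h (ρ x) * ((2 + Real.sqrt d) * (Q x * m)))) := t1
        _ ≤ G / 2 * (Q x ^ 2 + (2 + Real.sqrt d) ^ 2 * deriv h (ρ x) ^ 2 * m ^ 2) := t2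
        _ = 1 / 2 * (G * Q x ^ 2)
            + (2 + Real.sqrt d) ^ 2 / 2 * (ρ x * deriv h (ρ x)) * m ^ 2 := t3
        _ ≤ 1 / 2 * (G * Q x ^ 2)
            + (2 + Real.sqrt d) ^ 2 / 2 * (C₀ * h (ρ x)) * m ^ 2 := by linarith
        _ = 1 / 2 * (G * Q x ^ 2)
            + (2 + Real.sqrt d) ^ 2 / 2 * C₀ * (h (ρ x) * m ^ 2) := by ring
    have hkey : G * Q x ^ 2 = dvg V x - ρ x * (2 * S + Q x * T) := by
      rw [hdvg x]; ring
    have hlow : -((2 + Real.sqrt d) * (ρ x * (Q x * m))) ≤ ρ x * (2 * S + Q x * T) := by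
      have := neg_abs_le (ρ x * (2 * S + Q x * T))
      linarith [habs]
    have : G * Q x ^ 2 ≤ dvg V x + (2 + Real.sqrt d) * (ρ x * (Q x * m)) := by
      rw [hkey]; linarith
    have final : G * Q x ^ 2 ≤ dvg V x + 1 / 2 * (G * Q x ^ 2)
        + (2 + Real.sqrt d) ^ 2 / 2 * C₀ * (h (ρ x) * m ^ 2) := by linarith
    rw [hm2] at final
    linarith
  -- continuity and integrability
  have hsqc : Continuous sq := by
    rw [hsq_def]; exact Real.continuous_sqrt.comp hρ.continuous
  have hpdρc : ∀ i : Fin d, Continuous (fun x : Fin d → ℝ => pd i ρ x) :=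
    fun i => (contDiff_pd hρ i).continuous
  have hpdsqc : ∀ j : Fin d, Continuous (fun x => pd j sq x) := by
    intro j
    have e : (fun x => pd j sq x) = fun x => pd j ρ x / (2 * sq x) := funext fun x => hpdsq x j
    rw [e]
    exact (hpdρc j).div (continuous_const.mul hsqc) fun x => (mul_pos two_pos (hsqpos x)).ne'
  have hUcc : ∀ k : Fin d, Continuous (fun x => pd k u x) := fun k => (hUc k).continuous
  have hjacc : ∀ i j : Fin d, Continuous fun x => jac v x i j := by
    intro i j
    have e : (fun x => jac v x i j)
        = fun x => 1 / 2 * sq x * hess u x j i + pd i u x * (1 / 2 * pd j sq x) :=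
      funext fun x => jac_eq x i j
    rw [e]
    exact ((continuous_const.mul hsqc).mul (hHc j i)).add
      ((hUcc i).mul (continuous_const.mul (hpdsqc j)))
  have hh'c : Continuous fun x => deriv h (ρ x) := hh'ρc.continuous
  have hQcc : Continuous Q := hQc.continuous
  have hMc : Continuous fun x => ∑ i, ∑ j, hess u x i j ^ 2 :=
    continuous_finset_sum _ fun i _ => continuous_finset_sum _ fun j _ => (hHc i j).pow 2
  have hbox : unitBox d = Set.Icc (0 : Fin d → ℝ) 1 := rfl
  have msIcc : MeasurableSet (unitBox d) := by rw [hbox]; exact measurableSet_Icc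
  have i1 : IntegrableOn (fun x => deriv h (ρ x) * ∑ i, ∑ j, jac v x i j ^ 2) (unitBox d) := by
    rw [hbox]
    exact (hh'c.mul (continuous_finset_sum _ fun i _ =>
      continuous_finset_sum _ fun j _ => (hjacc i j).pow 2)).integrableOn_Icc
  have i2 : IntegrableOn
      (fun x => deriv h (ρ x) ^ 3 * (∑ i, pd i sq x ^ 2) ^ 2 / ρ x) (unitBox d) := by
    rw [hbox]
    exact (((hh'c.pow 3).mul ((continuous_finset_sum Finset.univ
      fun i _ => (hpdsqc i).pow 2).pow 2)).div hρ.continuous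
      fun x => (hpos x).ne').integrableOn_Icc
  have i3 : IntegrableOn (fun x => h (ρ x) * ∑ i, ∑ j, hess u x i j ^ 2) (unitBox d) := by
    rw [hbox]; exact (hhρc.continuous.mul hMc).integrableOn_Icc
  have ig : IntegrableOn (fun x => ρ x / deriv h (ρ x) * Q x ^ 2) (unitBox d) := by
    rw [hbox]
    exact ((hρ.continuous.div hh'c fun x => (hd1 x).ne').mul (hQcc.pow 2)).integrableOn_Icc
  have idv : IntegrableOn (fun x => dvg V x) (unitBox d) := by
    rw [hbox]
    apply Continuous.integrableOn_Icc
    exact continuous_finset_sum _ fun j _ => (contDiff_pd (hVc j) j).continuous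
  have hIdvg : ∫ x in unitBox d, dvg V x = 0 := integral_dvg_zero' hd V hVc hV_per
  have I3nn : 0 ≤ ∫ x in unitBox d, h (ρ x) * ∑ i, ∑ j, hess u x i j ^ 2 :=
    setIntegral_nonneg msIcc fun x _ => mul_nonneg (hh0 _ (hpos x)) (by positivity)
  -- step A
  have stepA : (∫ x in unitBox d, deriv h (ρ x) * ∑ i, ∑ j, jac v x i j ^ 2)
      ≤ 2 * (∫ x in unitBox d, deriv h (ρ x) ^ 3 * (∑ i, pd i sq x ^ 2) ^ 2 / ρ x)
        + C₀ / 2 * ∫ x in unitBox d, h (ρ x) * ∑ i, ∑ j, hess u x i j ^ 2 := by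
    have i23 : IntegrableOn (fun x => 2 * (deriv h (ρ x) ^ 3 * (∑ i, pd i sq x ^ 2) ^ 2 / ρ x)
        + C₀ / 2 * (h (ρ x) * ∑ i, ∑ j, hess u x i j ^ 2)) (unitBox d) :=
      (i2.const_mul 2).add (i3.const_mul (C₀ / 2))
    have mono := setIntegral_mono_on i1 i23 msIcc fun x _ => hbound1 x
    rwa [integral_add (i2.const_mul 2) (i3.const_mul _), integral_const_mul,
      integral_const_mul] at mono
  -- step B
  have stepB : (∫ x in unitBox d, deriv h (ρ x) ^ 3 * (∑ i, pd i sq x ^ 2) ^ 2 / ρ x)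
      = 1 / 16 * ∫ x in unitBox d, ρ x / deriv h (ρ x) * Q x ^ 2 := by
    rw [setIntegral_congr_fun msIcc (fun x _ => heq2 x), integral_const_mul]
  -- step C
  have stepC : (∫ x in unitBox d, ρ x / deriv h (ρ x) * Q x ^ 2)
      ≤ (2 + Real.sqrt d) ^ 2 * C₀ * ∫ x in unitBox d, h (ρ x) * ∑ i, ∑ j, hess u x i j ^ 2 := by
    have i23 : IntegrableOn (fun x => 2 * dvg V x
        + (2 + Real.sqrt d) ^ 2 * C₀ * (h (ρ x) * ∑ i, ∑ j, hess u x i j ^ 2)) (unitBox d) :=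
      (idv.const_mul 2).add (i3.const_mul ((2 + Real.sqrt d) ^ 2 * C₀))
    have mono := setIntegral_mono_on ig i23 msIcc fun x _ => hbound3 x
    rwa [integral_add (idv.const_mul 2) (i3.const_mul _), integral_const_mul,
      integral_const_mul, hIdvg, mul_zero, zero_add] at mono
  -- final assembly
  have hd1' : (1:ℝ) ≤ (d:ℝ) := by exact_mod_cast hd
  have hKd : Real.sqrt (d:ℝ) ≤ (d:ℝ) := by
    calc Real.sqrt (d:ℝ) ≤ Real.sqrt ((d:ℝ) ^ 2) := Real.sqrt_le_sqrt (by nlinarith)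
      _ = (d:ℝ) := Real.sqrt_sq (by positivity)
  have hsqb : (2 + Real.sqrt d) ^ 2 ≤ ((d:ℝ) + 2) ^ 2 := by
    nlinarith [hKd, Real.sqrt_nonneg (d:ℝ)]
  have coef : (3:ℝ) / 16 * (2 + Real.sqrt d) ^ 2 * C₀ + C₀ / 2 ≤ C₀ * (((d:ℝ) + 2) ^ 2 + 1) := by
    nlinarith [mul_le_mul_of_nonneg_left hsqb hC₀.le, sq_nonneg ((d:ℝ) + 2), hC₀.le,
      sq_nonneg (2 + Real.sqrt d)]
  have last := mul_le_mul_of_nonneg_right coef I3nn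
  have total : (∫ x in unitBox d, deriv h (ρ x) * ∑ i, ∑ j, jac v x i j ^ 2)
      + (∫ x in unitBox d, deriv h (ρ x) ^ 3 * (∑ i, pd i sq x ^ 2) ^ 2 / ρ x)
      ≤ C₀ * (((d:ℝ) + 2) ^ 2 + 1)
        * ∫ x in unitBox d, h (ρ x) * ∑ i, ∑ j, hess u x i j ^ 2 := by
    nlinarith [stepA, stepB, stepC, I3nn, last]
  exact total

end
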